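/- Fix real constants A > 0, M ≥ 0, γ ≥ 0, ρ0 ∈ (0,1), and J > (M/(Aρ0))·(e^{Aγ} − 1). Let z : ℝ → ℝ be differentiable on [t_s, t_c] with z'(t) = A·z(t) + w(t) and |w(t)| ≤ M for all t ∈ [t_s, t_c], suppose |z(t_s)| = J and 0 ≤ t_c − t_s ≤ γ. If q ∈ ℝ satisfies |t_s − q| ≤ (1/A)·ln(1 + (ρ0 − (M/(J·A))·(e^{Aγ} − 1))/e^{Aγ}), then the controller estimate z̄ := sign(z(t_s))·J·e^{A(t_c − q)} satisfies |z(t_c) − z̄| ≤ ρ0·J. (Lemma 1.) -/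

import Mathlib

open Set

/-!
Write `z(t_c) − z̄` as the drift `z(t_c) − e^{A(t_c−t_s)} z(t_s)`, which Grönwall's inequality
bounds by `(M/A)(e^{Aγ} − 1)`, plus the quantization error
`e^{A(t_c−t_s)} z(t_s) (1 − e^{A(t_s−q)})`. The bound on `|t_s − q|` makes
`|1 − e^{A(t_s−q)}| ≤ ε / e^{Aγ}` with `ε = ρ0 − (M/(JA))(e^{Aγ} − 1)`, so the second term is at
most `J ε`, and `(M/A)(e^{Aγ} − 1) + J ε = ρ0 J`.
-/

theorem Real.sign_mul_abs (r : ℝ) : Real.sign r * |r| = r := by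
  rcases lt_trichotomy r 0 with h | rfl | h
  · rw [Real.sign_of_neg h, abs_of_neg h]; ring
  · simp
  · rw [Real.sign_of_pos h, abs_of_pos h]; ring

theorem norm_sub_exp_smul_le_of_hasDerivAt {E : Type*} [NormedAddCommGroup E] [NormedSpace ℝ E]
    {A M a b : ℝ} {z w : ℝ → E} (hA : 0 < A) (hab : a ≤ b)
    (hz : ∀ t ∈ Icc a b, HasDerivAt z (A • z t + w t) t) (hw : ∀ t ∈ Icc a b, ‖w t‖ ≤ M) :
    ‖z b - Real.exp (A * (b - a)) • z a‖ ≤ M / A * (Real.exp (A * (b - a)) - 1) := by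
  set g : ℝ → E := fun t => z t - Real.exp (A * (t - a)) • z a
  have hg : ∀ t ∈ Icc a b, HasDerivAt g (A • g t + w t) t := by
    intro t ht
    have hexp : HasDerivAt (fun t => Real.exp (A * (t - a))) (Real.exp (A * (t - a)) * A) t := by
      simpa using (((hasDerivAt_id t).sub_const a).const_mul A).exp
    refine ((hz t ht).sub (hexp.smul_const (z a))).congr_deriv ?_
    simp only [g, smul_sub, smul_smul, mul_comm A]
    abel
  have hbound : ∀ t ∈ Ico a b, ‖A • g t + w t‖ ≤ A * ‖g t‖ + M := fun t ht =>
    calc ‖A • g t + w t‖ ≤ ‖A • g t‖ + ‖w t‖ := norm_add_le _ _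
      _ ≤ A * ‖g t‖ + M := by
        rw [norm_smul, Real.norm_of_nonneg hA.le]
        linarith [hw t (Ico_subset_Icc_self ht)]
  have := norm_le_gronwallBound_of_norm_deriv_right_le
    (fun t ht => (hg t ht).continuousAt.continuousWithinAt)
    (fun t ht => (hg t (Ico_subset_Icc_self ht)).hasDerivWithinAt)
    (by simp [g] : ‖g a‖ ≤ 0) hbound b ⟨hab, le_rfl⟩
  simpa [gronwallBound_of_K_ne_0 hA.ne'] using this

theorem abs_one_sub_exp_le_of_abs_le_log {x δ : ℝ} (hδ : 0 ≤ δ)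
    (hx : |x| ≤ Real.log (1 + δ)) : |1 - Real.exp x| ≤ δ := by
  have hupper : Real.exp x ≤ 1 + δ :=
    calc Real.exp x ≤ Real.exp (Real.log (1 + δ)) := Real.exp_le_exp.mpr ((le_abs_self x).trans hx)
      _ = 1 + δ := Real.exp_log (by linarith)
  have hlower : 1 - δ ≤ Real.exp x := by
    have hlog : Real.log (1 + δ) ≤ δ := by
      linarith [Real.log_le_sub_one_of_pos (by linarith : 0 < 1 + δ)]
    linarith [Real.add_one_le_exp x, neg_abs_le x]
  rw [abs_le]
  constructor <;> linarith

theorem quantized_time_jump_error_general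
    (A M γ ρ0 J : ℝ) (z w : ℝ → ℝ) (ts tc q : ℝ)
    (hA : 0 < A) (hM : 0 ≤ M)
    (hρ0 : 0 < ρ0)
    (hJ : (M / (A * ρ0)) * (Real.exp (A * γ) - 1) < J)
    (hz : ∀ t ∈ Icc ts tc, HasDerivAt z (A * z t + w t) t)
    (hw : ∀ t ∈ Icc ts tc, |w t| ≤ M)
    (hzts : |z ts| = J)
    (hdelay0 : 0 ≤ tc - ts) (hdelayγ : tc - ts ≤ γ)
    (hq : |ts - q| ≤ (1 / A) *
      Real.log (1 + (ρ0 - (M / (J * A)) * (Real.exp (A * γ) - 1)) / Real.exp (A * γ))) :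
    |z tc - Real.sign (z ts) * J * Real.exp (A * (tc - q))| ≤ ρ0 * J := by
  set E := Real.exp (A * γ)
  set e := Real.exp (A * (tc - ts))
  set ε := ρ0 - M / (J * A) * (E - 1)
  have he : e ≤ E := Real.exp_le_exp.mpr (mul_le_mul_of_nonneg_left hdelayγ hA.le)
  have hE : 1 ≤ E := Real.one_le_exp (by nlinarith)
  have hJ₀ : 0 < J := lt_of_le_of_lt (by positivity) hJ
  have hJε : J * ε = ρ0 * J - M / A * (E - 1) := by simp only [ε]; field_simp
  have hε : 0 ≤ ε := by
    refine nonneg_of_mul_nonneg_right (hJε ▸ sub_nonneg.mpr ?_) hJ₀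
    calc M / A * (E - 1) = ρ0 * (M / (A * ρ0) * (E - 1)) := by field_simp
      _ ≤ ρ0 * J := by gcongr
  have hdrift : |z tc - e * z ts| ≤ M / A * (e - 1) :=
    norm_sub_exp_smul_le_of_hasDerivAt hA (by linarith) hz hw
  have hquant : |1 - Real.exp (A * (ts - q))| ≤ ε / E := by
    refine abs_one_sub_exp_le_of_abs_le_log (by positivity) ?_
    rw [abs_mul, abs_of_pos hA, ← le_div_iff₀' hA, ← one_div_mul_eq_div]
    exact hq
  have hsplit : z tc - Real.sign (z ts) * J * Real.exp (A * (tc - q))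
      = (z tc - e * z ts) + e * z ts * (1 - Real.exp (A * (ts - q))) := by
    rw [← hzts, Real.sign_mul_abs, show A * (tc - q) = A * (tc - ts) + A * (ts - q) by ring,
      Real.exp_add]
    ring
  calc |z tc - Real.sign (z ts) * J * Real.exp (A * (tc - q))|
      ≤ |z tc - e * z ts| + e * J * |1 - Real.exp (A * (ts - q))| := by
        rw [hsplit]
        refine (abs_add_le _ _).trans_eq ?_
        rw [abs_mul, abs_mul, abs_of_pos (show 0 < e from Real.exp_pos _), hzts]
    _ ≤ M / A * (e - 1) + e * J * (ε / E) := by gcongr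
    _ ≤ M / A * (E - 1) + E * J * (ε / E) := by gcongr
    _ = ρ0 * J := by rw [show E * J * (ε / E) = J * ε by field_simp]; linarith

/-- **Lemma 1.** If the quantized triggering time `q` satisfies
`|t_s − q| ≤ (1/A)·ln(1 + (ρ0 − (M/(J·A))(e^{Aγ}−1))/e^{Aγ})`,
then the controller estimate `z̄ = sign(z(t_s))·J·e^{A(t_c − q)}`
satisfies `|z(t_c) − z̄| ≤ ρ0·J`. -/
theorem quantized_time_jump_error
    (A M γ ρ0 J : ℝ) (z w : ℝ → ℝ) (ts tc q : ℝ)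
    (hA : 0 < A) (hM : 0 ≤ M) (hγ : 0 ≤ γ)
    (hρ0 : 0 < ρ0) (hρ1 : ρ0 < 1)
    (hJ : (M / (A * ρ0)) * (Real.exp (A * γ) - 1) < J)
    (hz : ∀ t ∈ Icc ts tc, HasDerivAt z (A * z t + w t) t)
    (hw : ∀ t ∈ Icc ts tc, |w t| ≤ M)
    (hzts : |z ts| = J)
    (hdelay0 : 0 ≤ tc - ts) (hdelayγ : tc - ts ≤ γ)
    (hq : |ts - q| ≤ (1 / A) *
      Real.log (1 + (ρ0 - (M / (J * A)) * (Real.exp (A * γ) - 1)) / Real.exp (A * γ))) :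
    |z tc - Real.sign (z ts) * J * Real.exp (A * (tc - q))| ≤ ρ0 * J :=
  quantized_time_jump_error_general A M γ ρ0 J z w ts tc q hA hM hρ0 hJ hz hw hzts hdelay0 hdelayγ
    hq
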